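/- arXiv:2106.11176 — 10 statements merged into one kernel-verified Lean document; each statement's English description precedes it below -/
import Mathlib

section
/- Invariant 3 (extremities lie on the target segment): every node ((x, τ), (s, t), d) ∈ N satisfies τ + 2^{−d}·s = T(x − 2^{−d}) and τ + 2^{−d}·t = T(x + 2^{−d}), and moreover both x − 2^{−d} and x + 2^{−d} lie in the interval [−1, 1]; that is, the points (x − 2^{−d}, τ + 2^{−d}·s) and (x + 2^{−d}, τ + 2^{−d}·t) lie on the target segment joining (−1, s₀) to (1, t₀). -/
open Set

/-- The affine function whose graph over `[-1,1]` is the target segment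
joining `(-1, s₀)` to `(1, t₀)`. -/
noncomputable def Tline (s₀ t₀ x : ℝ) : ℝ := (s₀ + t₀) / 2 + ((t₀ - s₀) / 2) * x

/-- The smallest set of nodes `((x, τ), (s, t), d)` generated by the
root, delay and split rules of the slanted firing squad algorithm. -/
inductive Node (s₀ t₀ : ℝ) : (ℝ × ℝ) × (ℝ × ℝ) × ℕ → Prop
  | root : Node s₀ t₀ ((0, 0), (s₀, t₀), 0)
  | delay {x τ s t : ℝ} {d : ℕ} :
      Node s₀ t₀ ((x, τ), (s, t), d) → 2 ≤ s → 2 ≤ t →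
      Node s₀ t₀ ((x, τ + (2:ℝ)^(-(d:ℤ))), (s - 1, t - 1), d)
  | splitL {x τ s t : ℝ} {d : ℕ} :
      Node s₀ t₀ ((x, τ), (s, t), d) → s < 2 ∨ t < 2 →
      Node s₀ t₀ ((x - (2:ℝ)^(-((d:ℤ)+1)), τ + (2:ℝ)^(-((d:ℤ)+1))),
        (2*s - 1, s + t - 1), d + 1)
  | splitR {x τ s t : ℝ} {d : ℕ} :
      Node s₀ t₀ ((x, τ), (s, t), d) → s < 2 ∨ t < 2 →
      Node s₀ t₀ ((x + (2:ℝ)^(-((d:ℤ)+1)), τ + (2:ℝ)^(-((d:ℤ)+1))),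
        (s + t - 1, 2*t - 1), d + 1)

lemma half_pow (d : ℕ) : (2:ℝ)^(-((d:ℤ)+1)) = (2:ℝ)^(-(d:ℤ)) / 2 := by
  rw [neg_add, zpow_add₀ (by norm_num : (2:ℝ) ≠ 0)]
  norm_num
  ring

lemma node_aux (s₀ t₀ : ℝ) (p : (ℝ × ℝ) × (ℝ × ℝ) × ℕ) (h : Node s₀ t₀ p) :
    p.1.2 + (2:ℝ)^(-(p.2.2:ℤ)) * p.2.1.1 = Tline s₀ t₀ (p.1.1 - (2:ℝ)^(-(p.2.2:ℤ))) ∧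
    p.1.2 + (2:ℝ)^(-(p.2.2:ℤ)) * p.2.1.2 = Tline s₀ t₀ (p.1.1 + (2:ℝ)^(-(p.2.2:ℤ))) ∧
    p.1.1 - (2:ℝ)^(-(p.2.2:ℤ)) ∈ Set.Icc (-1 : ℝ) 1 ∧
    p.1.1 + (2:ℝ)^(-(p.2.2:ℤ)) ∈ Set.Icc (-1 : ℝ) 1 := by
  induction h with
  | root => simp [Tline]; constructor <;> ring
  | delay h hs ht ih =>
      obtain ⟨e1, e2, m1, m2⟩ := ih
      simp only [Tline] at *
      refine ⟨by ring_nf; ring_nf at e1; linarith, by ring_nf; ring_nf at e2; linarith, m1, m2⟩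
  | splitL h hst ih =>
      obtain ⟨e1, e2, m1, m2⟩ := ih
      rename_i x τ s t d
      simp only [Tline, half_pow, Set.mem_Icc] at *
      push_cast
      rw [half_pow]
      constructor
      · push_cast at *; nlinarith [e1]
      refine ⟨by push_cast at *; nlinarith [e1, e2], ?_, ?_⟩
      · constructor <;> linarith [m1.1, m1.2]
      · constructor <;> linarith [m1.1, m1.2, m2.1, m2.2]
  | splitR h hst ih =>
      obtain ⟨e1, e2, m1, m2⟩ := ih
      rename_i x τ s t d
      simp only [Tline, half_pow, Set.mem_Icc] at *
      push_cast
      rw [half_pow]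
      refine ⟨?_, ?_, ?_, ?_⟩
      · push_cast at *; nlinarith [e1, e2]
      · push_cast at *; nlinarith [e2]
      · constructor <;> linarith [m1.1, m1.2, m2.1, m2.2]
      · constructor <;> linarith [m2.1, m2.2]

theorem stmt2 (s₀ t₀ : ℝ) (hs₀ : 1 ≤ s₀) (ht₀ : 1 ≤ t₀)
    (x τ s t : ℝ) (d : ℕ) (h : Node s₀ t₀ ((x, τ), (s, t), d)) :
    τ + (2:ℝ)^(-(d:ℤ)) * s = Tline s₀ t₀ (x - (2:ℝ)^(-(d:ℤ))) ∧
    τ + (2:ℝ)^(-(d:ℤ)) * t = Tline s₀ t₀ (x + (2:ℝ)^(-(d:ℤ))) ∧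
    x - (2:ℝ)^(-(d:ℤ)) ∈ Set.Icc (-1 : ℝ) 1 ∧
    x + (2:ℝ)^(-(d:ℤ)) ∈ Set.Icc (-1 : ℝ) 1 := by
  exact node_aux s₀ t₀ _ h
end

section
/- Midpoint invariant: every node ((x, τ), (s, t), d) ∈ N satisfies τ + 2^{−d}·(s + t)/2 = T(x); that is, the point (x, τ + 2^{−d}(s + t)/2) lies on the target segment vertically above the node. -/
open Set

lemma aux3 (s₀ t₀ : ℝ) {p : (ℝ × ℝ) × (ℝ × ℝ) × ℕ} (h : Node s₀ t₀ p) :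
    p.1.2 + (2:ℝ)^(-(p.2.2:ℤ)) * (p.2.1.1 + p.2.1.2) / 2 = Tline s₀ t₀ p.1.1 ∧
      p.2.1.2 - p.2.1.1 = t₀ - s₀ := by
  induction h with
  | root => simp [Tline]
  | delay h _ _ ih =>
      simp only at ih ⊢
      constructor
      · linarith [ih.1]
      · linarith [ih.2]
  | @splitL x τ s t d h _ ih =>
      simp only at ih ⊢
      have h2 : (2:ℝ)^(-((d:ℤ)+1)) * 2 = (2:ℝ)^(-(d:ℤ)) := by
        rw [show -((d:ℤ)+1) = -(d:ℤ) + (-1) by ring, zpow_add₀ (by norm_num : (2:ℝ) ≠ 0)]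
        ring
      obtain ⟨ih1, ih2⟩ := ih
      simp only [Tline] at ih1 ⊢
      constructor
      · push_cast
        linear_combination ih1 + ((s+t)/2)*h2 - ((2:ℝ)^(-((d:ℤ)+1))/2)*ih2
      · linarith [ih2]
  | @splitR x τ s t d h _ ih =>
      simp only at ih ⊢
      have h2 : (2:ℝ)^(-((d:ℤ)+1)) * 2 = (2:ℝ)^(-(d:ℤ)) := by
        rw [show -((d:ℤ)+1) = -(d:ℤ) + (-1) by ring, zpow_add₀ (by norm_num : (2:ℝ) ≠ 0)]
        ring
      obtain ⟨ih1, ih2⟩ := ih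
      simp only [Tline] at ih1 ⊢
      constructor
      · push_cast
        linear_combination ih1 + ((s+t)/2)*h2 + ((2:ℝ)^(-((d:ℤ)+1))/2)*ih2
      · linarith [ih2]

theorem stmt3 (s₀ t₀ : ℝ) (hs₀ : 1 ≤ s₀) (ht₀ : 1 ≤ t₀)
    (x τ s t : ℝ) (d : ℕ) (h : Node s₀ t₀ ((x, τ), (s, t), d)) :
    τ + (2:ℝ)^(-(d:ℤ)) * (s + t) / 2 = Tline s₀ t₀ x := by
  exact (aux3 s₀ t₀ h).1
end

section
/- No node reaches the target segment: every node ((x, τ), (s, t), d) ∈ N satisfies τ + 2^{−d} ≤ T(x); in particular every node position lies strictly below the target segment, so P is disjoint from the target segment. -/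
open Set

lemma key (s₀ t₀ : ℝ) (hs₀ : 1 ≤ s₀) (ht₀ : 1 ≤ t₀) :
    ∀ p, Node s₀ t₀ p → 1 ≤ p.2.1.1 ∧ 1 ≤ p.2.1.2 ∧ p.2.1.2 - p.2.1.1 = t₀ - s₀ ∧
      Tline s₀ t₀ p.1.1 - p.1.2 = (2:ℝ)^(-(p.2.2:ℤ)) * (p.2.1.1 + p.2.1.2) / 2 := by
  have h2ne : (2:ℝ) ≠ 0 := by norm_num
  intro p hp
  induction hp with
  | root => exact ⟨hs₀, ht₀, rfl, by simp [Tline]⟩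
  | delay h hs ht ih =>
      obtain ⟨h1, h2, h3, h4⟩ := ih
      dsimp only at h1 h2 h3 h4 ⊢
      refine ⟨by linarith, by linarith, by linarith, by simp only [Tline] at h4 ⊢; ring_nf at h4 ⊢; linarith⟩
  | @splitL x τ s t d h hst ih =>
      obtain ⟨h1, h2, h3, h4⟩ := ih
      dsimp only at h1 h2 h3 h4 ⊢
      refine ⟨by linarith, by linarith, by linarith, ?_⟩
      have hpow : (2:ℝ)^(-(d:ℤ)) = 2 * (2:ℝ)^(-((d:ℤ)+1)) := by
        rw [show -(d:ℤ) = -((d:ℤ)+1) + 1 by ring, zpow_add₀ h2ne]; ring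
      push_cast
      rw [show -((d:ℤ)+1) = -(d:ℤ)+(-1) by ring] at *
      simp only [Tline] at h4 ⊢
      rw [zpow_add₀ h2ne] at *
      ring_nf at h4 ⊢
      nlinarith [h4, h3, zpow_pos (by norm_num : (0:ℝ) < 2) (-(d:ℤ))]
  | @splitR x τ s t d h hst ih =>
      obtain ⟨h1, h2, h3, h4⟩ := ih
      dsimp only at h1 h2 h3 h4 ⊢
      refine ⟨by linarith, by linarith, by linarith, ?_⟩
      push_cast
      rw [show -((d:ℤ)+1) = -(d:ℤ)+(-1) by ring] at *
      simp only [Tline] at h4 ⊢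
      rw [zpow_add₀ h2ne] at *
      ring_nf at h4 ⊢
      nlinarith [h4, h3, zpow_pos (by norm_num : (0:ℝ) < 2) (-(d:ℤ))]

theorem stmt6 (s₀ t₀ : ℝ) (hs₀ : 1 ≤ s₀) (ht₀ : 1 ≤ t₀) :
    (∀ x τ s t : ℝ, ∀ d : ℕ, Node s₀ t₀ ((x, τ), (s, t), d) →
      τ + (2:ℝ)^(-(d:ℤ)) ≤ Tline s₀ t₀ x) ∧
    Disjoint {p : ℝ × ℝ | ∃ s t : ℝ, ∃ d : ℕ, Node s₀ t₀ (p, (s, t), d)}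
      {p : ℝ × ℝ | ∃ x ∈ Set.Icc (-1 : ℝ) 1, p = (x, Tline s₀ t₀ x)} := by
  have main : ∀ x τ s t : ℝ, ∀ d : ℕ, Node s₀ t₀ ((x, τ), (s, t), d) →
      τ + (2:ℝ)^(-(d:ℤ)) ≤ Tline s₀ t₀ x := by
    intro x τ s t d hn
    obtain ⟨h1, h2, _, h4⟩ := key s₀ t₀ hs₀ ht₀ _ hn
    dsimp only at h1 h2 h4
    have hp : (0:ℝ) < (2:ℝ)^(-(d:ℤ)) := zpow_pos (by norm_num) _
    nlinarith
  refine ⟨main, ?_⟩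
  rw [Set.disjoint_left]
  rintro ⟨px, pτ⟩ ⟨s, t, d, hn⟩ ⟨x, _, hx⟩
  rw [Prod.mk.injEq] at hx
  obtain ⟨rfl, rfl⟩ := hx
  have := main px (Tline s₀ t₀ px) s t d hn
  have hp : (0:ℝ) < (2:ℝ)^(-(d:ℤ)) := zpow_pos (by norm_num) _
  linarith
end

section
/- Realizability of all dyadic abscissae: for every natural number d and every choice of signs a₁, …, a_d ∈ {−1, 1}, there exist real numbers τ, s, t such that ((Σ_{i=1}^{d} a_i·2^{−i}, τ), (s, t), d) ∈ N and this node is a split node (s < 2 or t < 2). -/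
open Set

/-- From any node with `1 ≤ s, t`, repeated delays reach a split node. -/
lemma delay_down (s₀ t₀ : ℝ) :
    ∀ n : ℕ, ∀ x τ s t : ℝ, ∀ d : ℕ, s ≤ n →
      Node s₀ t₀ ((x, τ), (s, t), d) → 1 ≤ s → 1 ≤ t →
      ∃ τ' s' t', Node s₀ t₀ ((x, τ'), (s', t'), d) ∧
        (s' < 2 ∨ t' < 2) ∧ 1 ≤ s' ∧ 1 ≤ t' := by
  intro n
  induction n with
  | zero =>
    intro x τ s t d hsn hnode hs ht
    refine ⟨τ, s, t, hnode, ?_, hs, ht⟩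
    left; push_cast at hsn; linarith
  | succ n ih =>
    intro x τ s t d hsn hnode hs ht
    by_cases h : s < 2 ∨ t < 2
    · exact ⟨τ, s, t, hnode, h, hs, ht⟩
    · push_neg at h
      obtain ⟨h2s, h2t⟩ := h
      have := Node.delay hnode h2s h2t
      exact ih x (τ + (2:ℝ)^(-(d:ℤ))) (s - 1) (t - 1) d (by push_cast at hsn ⊢; linarith)
        this (by linarith) (by linarith)

lemma exists_ceil (s : ℝ) : ∃ n : ℕ, s ≤ n := exists_nat_ge s

theorem stmt8 (s₀ t₀ : ℝ) (hs₀ : 1 ≤ s₀) (ht₀ : 1 ≤ t₀)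
    (d : ℕ) (a : Fin d → ℝ) (ha : ∀ i, a i = 1 ∨ a i = -1) :
    ∃ τ s t : ℝ,
      Node s₀ t₀ ((∑ i : Fin d, a i * (2:ℝ)^(-((i:ℕ):ℤ) - 1), τ), (s, t), d) ∧
      (s < 2 ∨ t < 2) := by
  suffices h : ∃ τ s t : ℝ,
      Node s₀ t₀ ((∑ i : Fin d, a i * (2:ℝ)^(-((i:ℕ):ℤ) - 1), τ), (s, t), d) ∧
      (s < 2 ∨ t < 2) ∧ 1 ≤ s ∧ 1 ≤ t by
    obtain ⟨τ, s, t, h1, h2, _⟩ := h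
    exact ⟨τ, s, t, h1, h2⟩
  induction d with
  | zero =>
    simp only [Finset.univ_eq_empty, Finset.sum_empty]
    obtain ⟨n, hn⟩ := exists_nat_ge s₀
    exact delay_down s₀ t₀ n 0 0 s₀ t₀ 0 hn Node.root hs₀ ht₀
  | succ d ih =>
    obtain ⟨τ, s, t, hnode, hsplit, hs, ht⟩ :=
      ih (fun i => a i.castSucc) (fun i => ha i.castSucc)
    have hsum : ∑ i : Fin (d+1), a i * (2:ℝ)^(-((i:ℕ):ℤ) - 1)
        = (∑ i : Fin d, a i.castSucc * (2:ℝ)^(-((i:ℕ):ℤ) - 1))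
          + a (Fin.last d) * (2:ℝ)^(-((d:ℤ)+1)) := by
      rw [Fin.sum_univ_castSucc]
      simp only [Fin.coe_castSucc, Fin.val_last]
      congr 2
      ring_nf
    rcases ha (Fin.last d) with h1 | h1
    · -- sign +1 : splitR
      have hnode' := Node.splitR hnode hsplit
      obtain ⟨n, hn⟩ := exists_nat_ge (s + t - 1)
      have := delay_down s₀ t₀ n _ _ _ _ (d+1) hn hnode' (by linarith) (by linarith)
      rw [hsum, h1, one_mul]
      exact this
    · -- sign -1 : splitL
      have hnode' := Node.splitL hnode hsplit
      obtain ⟨n, hn⟩ := exists_nat_ge (2*s - 1)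
      have := delay_down s₀ t₀ n _ _ _ _ (d+1) hn hnode' (by linarith) (by linarith)
      rw [hsum, h1]
      have hx : (∑ i : Fin d, a i.castSucc * (2:ℝ)^(-((i:ℕ):ℤ) - 1))
          + (-1) * (2:ℝ)^(-((d:ℤ)+1))
          = (∑ i : Fin d, a i.castSucc * (2:ℝ)^(-((i:ℕ):ℤ) - 1))
          - (2:ℝ)^(-((d:ℤ)+1)) := by ring
      rw [hx]
      exact this
end

section
/- Split nodes approximate every abscissa: for every real x ∈ [−1, 1] and every natural number d, there exists a split node ((x_d, τ_d), (s, t), d) ∈ N of depth d with |x_d − x| ≤ 2^{−d}; in particular the set of abscissae of split nodes is dense in [−1, 1]. -/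
open Set

/-- Applying delays, any node leads to a split node at the same depth and abscissa. -/
lemma to_split (s₀ t₀ : ℝ) :
    ∀ n : ℕ, ∀ x τ s t : ℝ, ∀ d : ℕ, s < 2 + n →
      Node s₀ t₀ ((x, τ), (s, t), d) →
      ∃ τ' s' t' : ℝ, Node s₀ t₀ ((x, τ'), (s', t'), d) ∧ (s' < 2 ∨ t' < 2)
  | 0 => fun x τ s t d hs h => ⟨τ, s, t, h, Or.inl (by simpa using hs)⟩
  | n+1 => fun x τ s t d hs h => by
      by_cases h2 : 2 ≤ s ∧ 2 ≤ t
      · exact to_split s₀ t₀ n x _ _ _ d (by push_cast at hs ⊢; linarith) (h.delay h2.1 h2.2)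
      · refine ⟨τ, s, t, h, ?_⟩
        rcases not_and_or.mp h2 with h' | h'
        · exact Or.inl (lt_of_not_ge h')
        · exact Or.inr (lt_of_not_ge h')

/-- From any node, there is a split node at the same depth and abscissa. -/
lemma node_to_split (s₀ t₀ : ℝ) {x τ s t : ℝ} {d : ℕ}
    (h : Node s₀ t₀ ((x, τ), (s, t), d)) :
    ∃ τ' s' t' : ℝ, Node s₀ t₀ ((x, τ'), (s', t'), d) ∧ (s' < 2 ∨ t' < 2) := by
  obtain ⟨n, hn⟩ := exists_nat_gt s
  exact to_split s₀ t₀ n x τ s t d (by linarith) h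

theorem stmt12 (s₀ t₀ : ℝ) (hs₀ : 1 ≤ s₀) (ht₀ : 1 ≤ t₀) :
    (∀ x ∈ Set.Icc (-1 : ℝ) 1, ∀ d : ℕ,
      ∃ xd τd s t : ℝ, Node s₀ t₀ ((xd, τd), (s, t), d) ∧ (s < 2 ∨ t < 2) ∧
        |xd - x| ≤ (2:ℝ)^(-(d:ℤ))) ∧
    Set.Icc (-1 : ℝ) 1 ⊆
      closure {xd : ℝ | ∃ τd s t : ℝ, ∃ d : ℕ,
        Node s₀ t₀ ((xd, τd), (s, t), d) ∧ (s < 2 ∨ t < 2)} := by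
  have key : ∀ x ∈ Set.Icc (-1 : ℝ) 1, ∀ d : ℕ,
      ∃ xd τd s t : ℝ, Node s₀ t₀ ((xd, τd), (s, t), d) ∧ (s < 2 ∨ t < 2) ∧
        |xd - x| ≤ (2:ℝ)^(-(d:ℤ)) := by
    intro x hx d
    obtain ⟨hx1, hx2⟩ := hx
    induction d with
    | zero =>
        obtain ⟨τ', s', t', hn, hsp⟩ := node_to_split s₀ t₀ Node.root
        exact ⟨0, τ', s', t', hn, hsp, by rw [abs_le]; constructor <;> simp <;> linarith⟩
    | succ d ih =>
        obtain ⟨xd, τd, s, t, hn, hsp, hb⟩ := ih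
        have hpow : (2:ℝ)^(-((d:ℤ)+1)) * 2 = (2:ℝ)^(-(d:ℤ)) := by
          rw [← zpow_add_one₀ (two_ne_zero)]; ring_nf
        have hppos : (0:ℝ) < (2:ℝ)^(-((d:ℤ)+1)) := by positivity
        rw [abs_le] at hb
        have hcast : (-(((d:ℕ)+1:ℕ):ℤ)) = -((d:ℤ)+1) := by push_cast; ring
        by_cases hle : x ≤ xd
        · obtain ⟨τ', s', t', hn', hsp'⟩ := node_to_split s₀ t₀ (hn.splitL hsp)
          refine ⟨xd - (2:ℝ)^(-((d:ℤ)+1)), τ', s', t', ?_, hsp', ?_⟩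
          · exact hn'
          · rw [hcast, abs_le]; constructor <;> nlinarith
        · push_neg at hle
          obtain ⟨τ', s', t', hn', hsp'⟩ := node_to_split s₀ t₀ (hn.splitR hsp)
          refine ⟨xd + (2:ℝ)^(-((d:ℤ)+1)), τ', s', t', ?_, hsp', ?_⟩
          · exact hn'
          · rw [hcast, abs_le]; constructor <;> nlinarith
  refine ⟨key, ?_⟩
  intro x hx
  rw [Metric.mem_closure_iff]
  intro ε hε
  obtain ⟨n, hn⟩ := exists_pow_lt_of_lt_one hε (by norm_num : (1:ℝ)/2 < 1)
  obtain ⟨xd, τd, s, t, hnode, hsp, hb⟩ := key x hx n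
  refine ⟨xd, ⟨τd, s, t, n, hnode, hsp⟩, ?_⟩
  have : (2:ℝ)^(-(n:ℤ)) = (1/2:ℝ)^n := by
    rw [zpow_neg, zpow_natCast, ← inv_pow]; norm_num
  calc dist x xd = |xd - x| := by rw [dist_comm, Real.dist_eq]
    _ ≤ (2:ℝ)^(-(n:ℤ)) := hb
    _ < ε := by rw [this]; exact hn
end

section
/- Quantitative approximation of the target segment: for every real x ∈ [−1, 1] and every natural number d, there exists a split node ((x_d, τ_d), (s, t), d) ∈ N with |x_d − x| ≤ 2^{−d} and |τ_d − T(x)| ≤ 2^{−d}·(2 + 2|S|). -/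
open Set

/-- Delay closure: from any node satisfying the invariants we can reach a split
node (same position, same depth) satisfying the invariants. -/
lemma delay_closure (s₀ t₀ : ℝ) :
    ∀ n : ℕ, ∀ x τ s t : ℝ, ∀ d : ℕ,
    Node s₀ t₀ ((x, τ), (s, t), d) → 1 ≤ s → 1 ≤ t → s ≤ n + 1 →
    τ + s * (2:ℝ)^(-(d:ℤ)) = Tline s₀ t₀ (x - (2:ℝ)^(-(d:ℤ))) →
    τ + t * (2:ℝ)^(-(d:ℤ)) = Tline s₀ t₀ (x + (2:ℝ)^(-(d:ℤ))) →
    ∃ τ' s' t', Node s₀ t₀ ((x, τ'), (s', t'), d) ∧ 1 ≤ s' ∧ 1 ≤ t' ∧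
      (s' < 2 ∨ t' < 2) ∧
      τ' + s' * (2:ℝ)^(-(d:ℤ)) = Tline s₀ t₀ (x - (2:ℝ)^(-(d:ℤ))) ∧
      τ' + t' * (2:ℝ)^(-(d:ℤ)) = Tline s₀ t₀ (x + (2:ℝ)^(-(d:ℤ))) := by
  intro n
  induction n with
  | zero =>
    intro x τ s t d h hs ht hsn e1 e2
    exact ⟨τ, s, t, h, hs, ht, Or.inl (by norm_num at hsn; linarith), e1, e2⟩
  | succ n ih =>
    intro x τ s t d h hs ht hsn e1 e2
    by_cases h2 : s < 2
    · exact ⟨τ, s, t, h, hs, ht, Or.inl h2, e1, e2⟩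
    by_cases h3 : t < 2
    · exact ⟨τ, s, t, h, hs, ht, Or.inr h3, e1, e2⟩
    push_neg at h2 h3
    have h' := Node.delay h h2 h3
    have := ih x (τ + (2:ℝ)^(-(d:ℤ))) (s - 1) (t - 1) d h'
      (by linarith) (by linarith) (by push_cast at hsn ⊢; linarith)
      (by rw [← e1]; ring) (by rw [← e2]; ring)
    exact this

/-- Main induction: for every depth `d` and target `x ∈ [-1,1]` there is a
split node at depth `d` within `2^{-d}` of `x`, satisfying the invariants. -/
lemma good_node (s₀ t₀ : ℝ) (hs₀ : 1 ≤ s₀) (ht₀ : 1 ≤ t₀) :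
    ∀ d : ℕ, ∀ x ∈ Set.Icc (-1 : ℝ) 1,
    ∃ xd τ s t : ℝ, Node s₀ t₀ ((xd, τ), (s, t), d) ∧ 1 ≤ s ∧ 1 ≤ t ∧
      (s < 2 ∨ t < 2) ∧
      τ + s * (2:ℝ)^(-(d:ℤ)) = Tline s₀ t₀ (xd - (2:ℝ)^(-(d:ℤ))) ∧
      τ + t * (2:ℝ)^(-(d:ℤ)) = Tline s₀ t₀ (xd + (2:ℝ)^(-(d:ℤ))) ∧
      |xd - x| ≤ (2:ℝ)^(-(d:ℤ)) := by
  intro d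
  induction d with
  | zero =>
    intro x hx
    obtain ⟨τ', s', t', hn, h1, h2, h3, h4, h5⟩ :=
      delay_closure s₀ t₀ ⌈s₀⌉₊ 0 0 s₀ t₀ 0 Node.root hs₀ ht₀
        ((Nat.le_ceil s₀).trans (by push_cast; linarith))
        (by simp [Tline]; ring) (by simp [Tline]; ring)
    refine ⟨0, τ', s', t', hn, h1, h2, h3, h4, h5, ?_⟩
    simp only [Int.ofNat_zero, neg_zero, zpow_zero]
    rw [abs_sub_comm]
    simpa [abs_le] using hx
  | succ d ih =>
    intro x hx
    obtain ⟨xd, τ, s, t, hn, hs1, ht1, hsp, e1, e2, hclose⟩ := ih x hx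
    set p : ℝ := (2:ℝ)^(-(d:ℤ)) with hpdef
    have hq : (2:ℝ)^(-((d:ℤ)+1)) = p / 2 := by
      rw [hpdef, show -((d:ℤ)+1) = -(d:ℤ) - 1 by ring,
        zpow_sub₀ (two_ne_zero : (2:ℝ) ≠ 0), zpow_one]
    have hq' : (2:ℝ)^(-(((d:ℕ)+1 : ℕ):ℤ)) = p / 2 := by
      push_cast; exact hq
    have hp : (0:ℝ) < p := by positivity
    rcases le_or_gt x xd with hside | hside
    · -- go left
      have hn' := Node.splitL hn hsp
      obtain ⟨τ', s', t', hN, h1, h2, h3, h4, h5⟩ :=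
        delay_closure s₀ t₀ ⌈(2*s-1 : ℝ)⌉₊ (xd - (2:ℝ)^(-((d:ℤ)+1)))
          (τ + (2:ℝ)^(-((d:ℤ)+1))) (2*s-1) (s+t-1) (d+1) (by exact_mod_cast hn')
          (by linarith) (by linarith)
          ((Nat.le_ceil _).trans (by push_cast; linarith))
          (by rw [hq', hq]; simp only [Tline] at e1 ⊢; linear_combination e1)
          (by rw [hq', hq]; simp only [Tline] at e1 e2 ⊢;
              linear_combination (e1 + e2) / 2)
      refine ⟨xd - (2:ℝ)^(-((d:ℤ)+1)), τ', s', t', hN, h1, h2, h3, h4, h5, ?_⟩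
      rw [hq, abs_le]
      have hup := (abs_le.mp hclose).2
      constructor <;> linarith
    · -- go right
      have hn' := Node.splitR hn hsp
      obtain ⟨τ', s', t', hN, h1, h2, h3, h4, h5⟩ :=
        delay_closure s₀ t₀ ⌈(s+t-1 : ℝ)⌉₊ (xd + (2:ℝ)^(-((d:ℤ)+1)))
          (τ + (2:ℝ)^(-((d:ℤ)+1))) (s+t-1) (2*t-1) (d+1) (by exact_mod_cast hn')
          (by linarith) (by linarith)
          ((Nat.le_ceil _).trans (by push_cast; linarith))
          (by rw [hq', hq]; simp only [Tline] at e1 e2 ⊢;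
              linear_combination (e1 + e2) / 2)
          (by rw [hq', hq]; simp only [Tline] at e2 ⊢; linear_combination e2)
      refine ⟨xd + (2:ℝ)^(-((d:ℤ)+1)), τ', s', t', hN, h1, h2, h3, h4, h5, ?_⟩
      rw [hq, abs_le]
      have hlo := (abs_le.mp hclose).1
      constructor <;> linarith

theorem stmt13 (s₀ t₀ : ℝ) (hs₀ : 1 ≤ s₀) (ht₀ : 1 ≤ t₀)
    (x : ℝ) (hx : x ∈ Set.Icc (-1 : ℝ) 1) (d : ℕ) :
    ∃ xd τd s t : ℝ, Node s₀ t₀ ((xd, τd), (s, t), d) ∧ (s < 2 ∨ t < 2) ∧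
      |xd - x| ≤ (2:ℝ)^(-(d:ℤ)) ∧
      |τd - Tline s₀ t₀ x| ≤ (2:ℝ)^(-(d:ℤ)) * (2 + 2 * |(t₀ - s₀) / 2|) := by
  obtain ⟨xd, τ, s, t, hn, hs1, ht1, hsp, e1, e2, hclose⟩ :=
    good_node s₀ t₀ hs₀ ht₀ d x hx
  set p : ℝ := (2:ℝ)^(-(d:ℤ)) with hpdef
  have hp : (0:ℝ) < p := by positivity
  set S : ℝ := (t₀ - s₀) / 2 with hSdef
  refine ⟨xd, τ, s, t, hn, hsp, hclose, ?_⟩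
  have habsS : (0:ℝ) ≤ |S| := abs_nonneg S
  have hSS : S ≤ |S| := le_abs_self S
  have hSS' : -|S| ≤ S := neg_abs_le S
  have hxd1 : xd - x ≤ p := (abs_le.mp hclose).2
  have hxd2 : -p ≤ xd - x := (abs_le.mp hclose).1
  rcases hsp with h2 | h2
  · have key : τ - Tline s₀ t₀ x = S * (xd - x) - S * p - s * p := by
      simp only [Tline, hSdef] at e1 ⊢
      linear_combination e1
    rw [key]
    have h3 : S * (xd - x) - S * p - s * p
        = S * (xd - x) + (-(S * p)) + (-(s * p)) := by ring
    rw [h3]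
    calc |S * (xd - x) + (-(S * p)) + (-(s * p))|
        ≤ |S * (xd - x)| + |(-(S * p))| + |(-(s * p))| := abs_add_three _ _ _
      _ = |S| * |xd - x| + |S| * p + s * p := by
          rw [abs_neg, abs_neg, abs_mul, abs_mul, abs_mul,
            abs_of_pos hp, abs_of_pos (by linarith : (0:ℝ) < s)]
      _ ≤ |S| * p + |S| * p + 2 * p := by
          have := mul_le_mul_of_nonneg_left hclose habsS
          have := mul_lt_mul_of_pos_right h2 hp
          linarith
      _ = p * (2 + 2 * |S|) := by ring
  · have key : τ - Tline s₀ t₀ x = S * (xd - x) + S * p - t * p := by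
      simp only [Tline, hSdef] at e2 ⊢
      linear_combination e2
    rw [key]
    have h3 : S * (xd - x) + S * p - t * p
        = S * (xd - x) + S * p + (-(t * p)) := by ring
    rw [h3]
    calc |S * (xd - x) + S * p + (-(t * p))|
        ≤ |S * (xd - x)| + |S * p| + |(-(t * p))| := abs_add_three _ _ _
      _ = |S| * |xd - x| + |S| * p + t * p := by
          rw [abs_neg, abs_mul, abs_mul, abs_mul,
            abs_of_pos hp, abs_of_pos (by linarith : (0:ℝ) < t)]
      _ ≤ |S| * p + |S| * p + 2 * p := by
          have := mul_le_mul_of_nonneg_left hclose habsS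
          have := mul_lt_mul_of_pos_right h2 hp
          linarith
      _ = p * (2 + 2 * |S|) := by ring
end

section
/- Boundedness of parameters below depth one: every node ((x, τ), (s, t), d) ∈ N with d ≥ 1 satisfies s ≤ 3 + 4|S| and t ≤ 3 + 4|S|. -/
open Set

lemma node_diff (s₀ t₀ : ℝ) : ∀ p, Node s₀ t₀ p → p.2.1.2 - p.2.1.1 = t₀ - s₀ := by
  intro p hp
  induction hp with
  | root => simp
  | delay _ _ _ ih => simp at ih ⊢; linarith
  | splitL _ _ ih => simp at ih ⊢; linarith
  | splitR _ _ ih => simp at ih ⊢; linarith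

theorem stmt15 (s₀ t₀ : ℝ) (hs₀ : 1 ≤ s₀) (ht₀ : 1 ≤ t₀)
    (x τ s t : ℝ) (d : ℕ) (h : Node s₀ t₀ ((x, τ), (s, t), d)) (hd : 1 ≤ d) :
    s ≤ 3 + 4 * |(t₀ - s₀) / 2| ∧ t ≤ 3 + 4 * |(t₀ - s₀) / 2| := by
  have habs : 4 * |(t₀ - s₀) / 2| = 2 * |t₀ - s₀| := by
    rw [abs_div]; norm_num; ring
  rw [habs]
  have hD1 := le_abs_self (t₀ - s₀)
  have hD2 := neg_abs_le (t₀ - s₀)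
  have hD0 := abs_nonneg (t₀ - s₀)
  have key : ∀ p, Node s₀ t₀ p → 1 ≤ p.2.2 →
      p.2.1.1 ≤ 3 + 2 * |t₀ - s₀| ∧ p.2.1.2 ≤ 3 + 2 * |t₀ - s₀| := by
    intro p hp
    induction hp with
    | root => intro hd'; simp at hd'
    | delay _ _ _ ih =>
        intro hd'; simp at hd' ⊢
        obtain ⟨h1, h2⟩ := ih hd'
        simp at h1 h2
        constructor <;> linarith
    | @splitL x' τ' s' t' d' hn hor _ =>
        intro _
        have hdiff := node_diff s₀ t₀ _ hn
        simp at hdiff ⊢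
        rcases hor with h' | h' <;> constructor <;> linarith
    | @splitR x' τ' s' t' d' hn hor _ =>
        intro _
        have hdiff := node_diff s₀ t₀ _ hn
        simp at hdiff ⊢
        rcases hor with h' | h' <;> constructor <;> linarith
  exact key _ h hd
end

section
/- Uniform vertical closeness below depth one: every node ((x, τ), (s, t), d) ∈ N with d ≥ 1 satisfies 2^{−d} ≤ T(x) − τ ≤ 2^{−d}·(3 + 4|S|); hence the vertical distance from a node to the target line tends to 0 uniformly as the depth tends to infinity. -/
open Set

lemma node_key (s₀ t₀ : ℝ) (hs₀ : 1 ≤ s₀) (ht₀ : 1 ≤ t₀) :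
    ∀ p, Node s₀ t₀ p →
    1 ≤ p.2.1.1 ∧ 1 ≤ p.2.1.2 ∧ p.2.1.2 - p.2.1.1 = t₀ - s₀ ∧
    Tline s₀ t₀ p.1.1 - p.1.2 = (2:ℝ)^(-(p.2.2:ℤ)) * ((p.2.1.1 + p.2.1.2) / 2) ∧
    (1 ≤ p.2.2 → p.2.1.1 ≤ 3 + 4 * |(t₀ - s₀) / 2| ∧
      p.2.1.2 ≤ 3 + 4 * |(t₀ - s₀) / 2|) := by
  intro p h
  induction h with
  | root =>
      refine ⟨hs₀, ht₀, rfl, ?_, fun h1 => absurd h1 (by norm_num)⟩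
      simp only [Tline]
      norm_num
  | delay h hs ht ih =>
      obtain ⟨h1, h2, h3, h4, h5⟩ := ih
      dsimp only at h1 h2 h3 h4 h5 ⊢
      refine ⟨by linarith, by linarith, by linarith, by linear_combination h4, ?_⟩
      intro hd
      obtain ⟨a, b⟩ := h5 hd
      exact ⟨by linarith, by linarith⟩
  | @splitL x τ s t d h hst ih =>
      obtain ⟨h1, h2, h3, h4, _⟩ := ih
      dsimp only at h1 h2 h3 h4 ⊢
      have hS1 : -((t₀ - s₀) / 2) ≤ |(t₀ - s₀) / 2| := neg_le_abs _
      have hS2 : (t₀ - s₀) / 2 ≤ |(t₀ - s₀) / 2| := le_abs_self _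
      have he : (2:ℝ)^(-((d:ℤ)+1)) = (2:ℝ)^(-(d:ℤ)) / 2 := by
        rw [show -((d:ℤ)+1) = -(d:ℤ) + (-1) by ring, zpow_add₀ (by norm_num : (2:ℝ) ≠ 0), zpow_neg_one]; ring
      have hpow : (0:ℝ) < (2:ℝ)^(-(d:ℤ)) := by positivity
      refine ⟨by linarith, by linarith, by linarith, ?_, ?_⟩
      · push_cast
        rw [he]
        simp only [Tline] at h4 ⊢
        linear_combination h4 + ((2:ℝ)^(-(d:ℤ))/4) * h3
      · intro _
        rcases hst with hst | hst
        · constructor <;> nlinarith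
        · constructor <;> nlinarith
  | @splitR x τ s t d h hst ih =>
      obtain ⟨h1, h2, h3, h4, _⟩ := ih
      dsimp only at h1 h2 h3 h4 ⊢
      have hS1 : -((t₀ - s₀) / 2) ≤ |(t₀ - s₀) / 2| := neg_le_abs _
      have hS2 : (t₀ - s₀) / 2 ≤ |(t₀ - s₀) / 2| := le_abs_self _
      have he : (2:ℝ)^(-((d:ℤ)+1)) = (2:ℝ)^(-(d:ℤ)) / 2 := by
        rw [show -((d:ℤ)+1) = -(d:ℤ) + (-1) by ring, zpow_add₀ (by norm_num : (2:ℝ) ≠ 0), zpow_neg_one]; ring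
      have hpow : (0:ℝ) < (2:ℝ)^(-(d:ℤ)) := by positivity
      refine ⟨by linarith, by linarith, by linarith, ?_, ?_⟩
      · push_cast
        rw [he]
        simp only [Tline] at h4 ⊢
        linear_combination h4 - ((2:ℝ)^(-(d:ℤ))/4) * h3
      · intro _
        rcases hst with hst | hst
        · constructor <;> nlinarith
        · constructor <;> nlinarith

theorem stmt16 (s₀ t₀ : ℝ) (hs₀ : 1 ≤ s₀) (ht₀ : 1 ≤ t₀)
    (x τ s t : ℝ) (d : ℕ) (h : Node s₀ t₀ ((x, τ), (s, t), d)) (hd : 1 ≤ d) :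
    (2:ℝ)^(-(d:ℤ)) ≤ Tline s₀ t₀ x - τ ∧
    Tline s₀ t₀ x - τ ≤ (2:ℝ)^(-(d:ℤ)) * (3 + 4 * |(t₀ - s₀) / 2|) := by
  obtain ⟨h1, h2, h3, h4, h5⟩ := node_key s₀ t₀ hs₀ ht₀ _ h
  dsimp at h1 h2 h3 h4 h5
  obtain ⟨ha, hb⟩ := h5 hd
  have hpow : (0:ℝ) < (2:ℝ)^(-(d:ℤ)) := by positivity
  rw [h4]
  constructor
  · nlinarith
  · nlinarith
end

section
/- Local finiteness away from the target segment: for every point p ∈ ℝ² not lying on the target segment, there exists ε > 0 such that the set of node positions P contained in the open ball of radius ε around p is finite. -/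
open Set

noncomputable def Kc (s₀ t₀ : ℝ) : ℝ := max (3 * (4 + |t₀ - s₀|)) (s₀ + t₀)

def NInv (s₀ t₀ : ℝ) : (ℝ × ℝ) × (ℝ × ℝ) × ℕ → Prop
  | ((x, τ), (s, t), d) =>
      1 ≤ s ∧ 1 ≤ t ∧ t - s = t₀ - s₀ ∧ s + t ≤ Kc s₀ t₀ ∧
      τ + (2:ℝ)^(-(d:ℤ)) * (s + t) / 2 = Tline s₀ t₀ x ∧
      |x| ≤ 1 - (2:ℝ)^(-(d:ℤ)) ∧ 0 ≤ τ ∧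
      (∃ m : ℤ, x = m * (2:ℝ)^(-(d:ℤ))) ∧ (∃ n : ℕ, τ = n * (2:ℝ)^(-(d:ℤ)))

lemma node_inv (s₀ t₀ : ℝ) (hs₀ : 1 ≤ s₀) (ht₀ : 1 ≤ t₀) :
    ∀ q, Node s₀ t₀ q → NInv s₀ t₀ q := by
  have hK1 : 3 * (4 + |t₀ - s₀|) ≤ Kc s₀ t₀ := le_max_left _ _
  have hK2 : s₀ + t₀ ≤ Kc s₀ t₀ := le_max_right _ _
  have hA1 : t₀ - s₀ ≤ |t₀ - s₀| := le_abs_self _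
  have hA2 : -(t₀ - s₀) ≤ |t₀ - s₀| := neg_le_abs _
  intro q h
  induction h with
  | root =>
      refine ⟨hs₀, ht₀, rfl, hK2, ?_, by norm_num, le_refl _, ⟨0, by norm_num⟩, ⟨0, by norm_num⟩⟩
      simp [Tline]
  | @delay x τ s t d h hs ht ih =>
      obtain ⟨i1, i2, i3, i4, i5, i6, i7, ⟨m, hm⟩, ⟨n, hn⟩⟩ := ih
      refine ⟨by linarith, by linarith, by linarith, by linarith, by linarith [i5], i6,
        by positivity, ⟨m, hm⟩, ⟨n + 1, ?_⟩⟩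
      push_cast
      linarith [hn]
  | @splitL x τ s t d h hc ih =>
      obtain ⟨i1, i2, i3, i4, i5, i6, i7, ⟨m, hm⟩, ⟨n, hn⟩⟩ := ih
      have hz : (2:ℝ)^(-(d:ℤ)) = 2 * (2:ℝ)^(-((d:ℤ)+1)) := by
        rw [show -(d:ℤ) = -((d:ℤ)+1)+1 by ring, zpow_add_one₀ (by norm_num : (2:ℝ) ≠ 0)]
        ring
      have hy : (0:ℝ) < (2:ℝ)^(-((d:ℤ)+1)) := zpow_pos (by norm_num) _
      have hcast : (-((d:ℕ)+1:ℕ):ℤ) = -((d:ℤ)+1) := by push_cast; ring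
      have hsum : 2*s - 1 + (s + t - 1) ≤ Kc s₀ t₀ := by
        rcases hc with hc | hc
        · linarith
        · linarith
      refine ⟨by linarith, by linarith, by ring_nf; linarith, hsum, ?_, ?_, by positivity,
        ⟨2*m - 1, ?_⟩, ⟨2*n + 1, ?_⟩⟩
      · rw [hcast]
        simp only [Tline] at i5 ⊢
        rw [hz] at i5
        linear_combination i5 - (2:ℝ)^(-((d:ℤ)+1))/2 * i3
      · rw [hcast]
        rw [hz] at i6
        rw [abs_le] at i6 ⊢
        constructor <;> cases' i6 with i6a i6b <;> linarith
      · rw [hcast, hm, hz]; push_cast; ring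
      · rw [hcast, hn, hz]; push_cast; ring
  | @splitR x τ s t d h hc ih =>
      obtain ⟨i1, i2, i3, i4, i5, i6, i7, ⟨m, hm⟩, ⟨n, hn⟩⟩ := ih
      have hz : (2:ℝ)^(-(d:ℤ)) = 2 * (2:ℝ)^(-((d:ℤ)+1)) := by
        rw [show -(d:ℤ) = -((d:ℤ)+1)+1 by ring, zpow_add_one₀ (by norm_num : (2:ℝ) ≠ 0)]
        ring
      have hy : (0:ℝ) < (2:ℝ)^(-((d:ℤ)+1)) := zpow_pos (by norm_num) _
      have hcast : (-((d:ℕ)+1:ℕ):ℤ) = -((d:ℤ)+1) := by push_cast; ring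
      have hsum : s + t - 1 + (2*t - 1) ≤ Kc s₀ t₀ := by
        rcases hc with hc | hc
        · linarith
        · linarith
      refine ⟨by linarith, by linarith, by ring_nf; linarith, hsum, ?_, ?_, by positivity,
        ⟨2*m + 1, ?_⟩, ⟨2*n + 1, ?_⟩⟩
      · rw [hcast]
        simp only [Tline] at i5 ⊢
        rw [hz] at i5
        linear_combination i5 + (2:ℝ)^(-((d:ℤ)+1))/2 * i3
      · rw [hcast]
        rw [hz] at i6
        rw [abs_le] at i6 ⊢
        constructor <;> cases' i6 with i6a i6b <;> linarith
      · rw [hcast, hm, hz]; push_cast; ring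
      · rw [hcast, hn, hz]; push_cast; ring

lemma grid_finite (d : ℕ) (M : ℝ) :
    {q : ℝ × ℝ | (∃ m : ℤ, q.1 = m * (2:ℝ)^(-(d:ℤ))) ∧ |q.1| ≤ 1 ∧
      (∃ n : ℤ, q.2 = n * (2:ℝ)^(-(d:ℤ))) ∧ |q.2| ≤ M}.Finite := by
  have h2 : (0:ℝ) < (2:ℝ)^(-(d:ℤ)) := zpow_pos (by norm_num) _
  have hmul : (2:ℝ)^(-(d:ℤ)) * (2:ℝ)^(d:ℕ) = 1 := by
    rw [← zpow_natCast (2:ℝ) d, ← zpow_add₀ (by norm_num : (2:ℝ) ≠ 0)]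
    norm_num
  have h2d : (0:ℝ) < (2:ℝ)^(d:ℕ) := by positivity
  apply Set.Finite.subset ((Set.Finite.prod (Set.finite_Icc (-(⌈(1:ℝ)⌉ * 2^d) : ℤ) (⌈(1:ℝ)⌉ * 2^d))
    (Set.finite_Icc (-(⌈M⌉ * 2^d) : ℤ) (⌈M⌉ * 2^d))).image
    (fun mn : ℤ × ℤ => ((mn.1 : ℝ) * (2:ℝ)^(-(d:ℤ)), (mn.2 : ℝ) * (2:ℝ)^(-(d:ℤ)))))
  rintro ⟨a, b⟩ ⟨⟨m, hm⟩, ha, ⟨n, hn⟩, hb⟩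
  have bound : ∀ (k : ℤ) (c B : ℝ), c = k * (2:ℝ)^(-(d:ℤ)) → |c| ≤ B →
      -(⌈B⌉ * 2^d) ≤ k ∧ k ≤ ⌈B⌉ * 2^d := by
    intro k c B hc hcb
    have hB : |(k:ℝ)| ≤ B * 2^(d:ℕ) := by
      have : |c| * 2^(d:ℕ) ≤ B * 2^(d:ℕ) := by nlinarith
      calc |(k:ℝ)| = |c| * 2^(d:ℕ) := by
            rw [hc, abs_mul, abs_of_pos h2, mul_assoc, hmul, mul_one]
        _ ≤ B * 2^(d:ℕ) := this
    have hB2 : |(k:ℝ)| ≤ (⌈B⌉ * 2^d : ℤ) := by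
      push_cast
      calc |(k:ℝ)| ≤ B * 2^(d:ℕ) := hB
        _ ≤ (⌈B⌉:ℝ) * 2^(d:ℕ) := by nlinarith [Int.le_ceil B]
    rw [abs_le] at hB2
    constructor <;> [exact_mod_cast hB2.1; exact_mod_cast hB2.2]
  obtain ⟨hm1, hm2⟩ := bound m a 1 hm ha
  obtain ⟨hn1, hn2⟩ := bound n b M hn hb
  exact ⟨(m, n), ⟨⟨hm1, hm2⟩, hn1, hn2⟩, by dsimp only; rw [← hm, ← hn]⟩

lemma depth_bound (s₀ t₀ : ℝ) (hs₀ : 1 ≤ s₀) (ht₀ : 1 ≤ t₀) (p : ℝ × ℝ)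
    (hp : p ∉ {q : ℝ × ℝ | ∃ x ∈ Set.Icc (-1 : ℝ) 1, q = (x, Tline s₀ t₀ x)}) :
    ∃ ε > 0, ∃ D : ℕ, ∀ x τ s t : ℝ, ∀ d : ℕ,
      Node s₀ t₀ ((x, τ), (s, t), d) → dist ((x, τ) : ℝ × ℝ) p < ε → d ≤ D := by
  obtain ⟨p1, p2⟩ := p
  have hdists : ∀ x τ : ℝ, dist ((x, τ) : ℝ × ℝ) (p1, p2) < |x - p1| → False := by
    intro x τ h
    have h2 : dist x p1 ≤ dist ((x, τ) : ℝ × ℝ) (p1, p2) := by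
      rw [Prod.dist_eq]; exact le_max_left _ _
    rw [Real.dist_eq] at h2
    linarith
  have hdistt : ∀ x τ : ℝ, dist ((x, τ) : ℝ × ℝ) (p1, p2) < |τ - p2| → False := by
    intro x τ h
    have h2 : dist τ p2 ≤ dist ((x, τ) : ℝ × ℝ) (p1, p2) := by
      rw [Prod.dist_eq]; exact le_max_right _ _
    rw [Real.dist_eq] at h2
    linarith
  by_cases h1 : 1 < |p1|
  · refine ⟨|p1| - 1, by linarith, 0, ?_⟩
    intro x τ s t d hn hdist
    exfalso
    obtain ⟨_, _, _, _, _, i6, _, _, _⟩ := node_inv s₀ t₀ hs₀ ht₀ _ hn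
    have hy : (0:ℝ) < (2:ℝ)^(-(d:ℤ)) := zpow_pos (by norm_num) _
    have hx1 : |x| ≤ 1 := by linarith
    have h2 : |p1| - |x| ≤ |x - p1| := by
      rw [abs_sub_comm]; exact abs_sub_abs_le_abs_sub p1 x
    exact hdists x τ (by linarith)
  · push_neg at h1
    have hne : p2 ≠ Tline s₀ t₀ p1 := by
      intro h
      exact hp ⟨p1, ⟨(abs_le.mp h1).1, (abs_le.mp h1).2⟩, by rw [h]⟩
    have hδ : 0 < |Tline s₀ t₀ p1 - p2| := abs_pos.mpr (sub_ne_zero.mpr (Ne.symm hne))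
    set δ := |Tline s₀ t₀ p1 - p2| with hδdef
    set L : ℝ := 1 + |t₀ - s₀| / 2 with hLdef
    have hL : 0 < L := by have := abs_nonneg (t₀ - s₀); simp [hLdef]; linarith
    have hε : 0 < δ / (2 * L) := by positivity
    have hKpos : 0 < Kc s₀ t₀ := lt_of_lt_of_le (by linarith) (le_max_right _ _)
    obtain ⟨D, hD⟩ := exists_pow_lt_of_lt_one (div_pos hδ hKpos)
      (by norm_num : (1:ℝ)/2 < 1)
    have hDz : (2:ℝ)^(-(D:ℤ)) < δ / Kc s₀ t₀ := by
      rwa [zpow_neg, zpow_natCast, ← inv_pow, ← one_div]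
    refine ⟨δ / (2 * L), hε, D, ?_⟩
    intro x τ s t d hn hdist
    obtain ⟨i1, i2, i3, i4, i5, i6, i7, _, _⟩ := node_inv s₀ t₀ hs₀ ht₀ _ hn
    have hy : (0:ℝ) < (2:ℝ)^(-(d:ℤ)) := zpow_pos (by norm_num) _
    -- component distances
    have hdx : |x - p1| < δ / (2 * L) := by
      by_contra hcon
      exact hdists x τ (lt_of_lt_of_le hdist (not_lt.mp hcon))
    have hdτ : |τ - p2| < δ / (2 * L) := by
      by_contra hcon
      exact hdistt x τ (lt_of_lt_of_le hdist (not_lt.mp hcon))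
    have hT : |Tline s₀ t₀ x - Tline s₀ t₀ p1| ≤ (|t₀ - s₀| / 2) * |x - p1| := by
      have : Tline s₀ t₀ x - Tline s₀ t₀ p1 = ((t₀ - s₀) / 2) * (x - p1) := by
        simp [Tline]; ring
      rw [this, abs_mul, abs_div, abs_two]
    have hTb : |Tline s₀ t₀ x - Tline s₀ t₀ p1| ≤ (|t₀ - s₀| / 2) * (δ / (2 * L)) := by
      refine le_trans hT ?_
      have := abs_nonneg (t₀ - s₀)
      nlinarith [abs_nonneg (x - p1)]
    have hLε : L * (δ / (2 * L)) = δ / 2 := by field_simp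
    -- the gap
    have hgap_pos : 0 < Tline s₀ t₀ x - τ := by
      have : (0:ℝ) < (2:ℝ)^(-(d:ℤ)) * (s + t) / 2 := by positivity
      linarith [i5]
    have hgap_le : Tline s₀ t₀ x - τ ≤ (2:ℝ)^(-(d:ℤ)) * Kc s₀ t₀ / 2 := by
      nlinarith [i5]
    rcases lt_or_gt_of_ne hne with hlt | hgt
    · -- p2 < Tline p1 : δ = Tline p1 - p2, gap ≥ δ/2
      have hδeq : δ = Tline s₀ t₀ p1 - p2 := abs_of_pos (by linarith)
      have hgap_ge : δ / 2 ≤ Tline s₀ t₀ x - τ := by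
        -- Tline x - τ = (Tline x - Tline p1) + (Tline p1 - p2) + (p2 - τ)
        have b1 : -((|t₀ - s₀| / 2) * (δ / (2 * L))) ≤ Tline s₀ t₀ x - Tline s₀ t₀ p1 :=
          (abs_le.mp hTb).1
        have b2 : τ - p2 ≤ δ / (2 * L) := (abs_le.mp hdτ.le).2
        have expand : (|t₀ - s₀| / 2) * (δ / (2 * L)) + δ / (2 * L) = δ / 2 := by
          rw [← hLε, hLdef]; ring
        linarith
      -- then depth is bounded
      by_contra hd
      push_neg at hd
      have : (2:ℝ)^(-(d:ℤ)) ≤ (2:ℝ)^(-(D:ℤ)) := by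
        apply zpow_le_zpow_right₀ (by norm_num : (1:ℝ) ≤ 2)
        omega
      have : (2:ℝ)^(-(d:ℤ)) < δ / Kc s₀ t₀ := lt_of_le_of_lt this hDz
      have hfin : (2:ℝ)^(-(d:ℤ)) * Kc s₀ t₀ < δ := (lt_div_iff₀ hKpos).mp this
      linarith
    · -- p2 > Tline p1 : contradiction, gap would be negative
      exfalso
      have hδeq : δ = p2 - Tline s₀ t₀ p1 := by
        rw [hδdef, abs_of_neg (by linarith)]; ring
      have b1 : Tline s₀ t₀ x - Tline s₀ t₀ p1 ≤ (|t₀ - s₀| / 2) * (δ / (2 * L)) :=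
        (abs_le.mp hTb).2
      have b2 : p2 - τ ≤ δ / (2 * L) := by
        have := (abs_le.mp hdτ.le).1; linarith
      have expand : (|t₀ - s₀| / 2) * (δ / (2 * L)) + δ / (2 * L) = δ / 2 := by
        rw [← hLε, hLdef]; ring
      linarith

theorem stmt17 (s₀ t₀ : ℝ) (hs₀ : 1 ≤ s₀) (ht₀ : 1 ≤ t₀)
    (p : ℝ × ℝ)
    (hp : p ∉ {q : ℝ × ℝ | ∃ x ∈ Set.Icc (-1 : ℝ) 1, q = (x, Tline s₀ t₀ x)}) :
    ∃ ε > 0,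
      ({q : ℝ × ℝ | ∃ s t : ℝ, ∃ d : ℕ, Node s₀ t₀ (q, (s, t), d)} ∩
        Metric.ball p ε).Finite := by
  obtain ⟨ε, hε, D, hD⟩ := depth_bound s₀ t₀ hs₀ ht₀ p hp
  have hfin : (⋃ d ∈ Set.Iic D, {q : ℝ × ℝ |
      (∃ m : ℤ, q.1 = m * (2:ℝ)^(-(d:ℤ))) ∧ |q.1| ≤ 1 ∧
      (∃ n : ℤ, q.2 = n * (2:ℝ)^(-(d:ℤ))) ∧ |q.2| ≤ s₀ + t₀}).Finite :=
    Set.Finite.biUnion (Set.finite_Iic D) (fun d _ => grid_finite d (s₀ + t₀))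
  refine ⟨ε, hε, hfin.subset ?_⟩
  rintro ⟨a, b⟩ ⟨⟨s, t, d, hn⟩, hball⟩
  obtain ⟨i1, i2, i3, i4, i5, i6, i7, ⟨m, hm⟩, ⟨n, hn'⟩⟩ := node_inv s₀ t₀ hs₀ ht₀ _ hn
  have hy : (0:ℝ) < (2:ℝ)^(-(d:ℤ)) := zpow_pos (by norm_num) _
  have hdle : d ≤ D := hD a b s t d hn (Metric.mem_ball.mp hball)
  have hx1 : |a| ≤ 1 := by linarith
  have hb1 : (t₀ - s₀) / 2 * a ≤ |t₀ - s₀| / 2 := by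
    calc (t₀ - s₀) / 2 * a ≤ |(t₀ - s₀) / 2 * a| := le_abs_self _
      _ = |(t₀ - s₀) / 2| * |a| := abs_mul _ _
      _ ≤ |(t₀ - s₀) / 2| * 1 := by
          exact mul_le_mul_of_nonneg_left hx1 (abs_nonneg _)
      _ = |t₀ - s₀| / 2 := by rw [mul_one, abs_div, abs_two]
  have hΔ : |t₀ - s₀| ≤ s₀ + t₀ := by
    rw [abs_le]; constructor <;> linarith
  have hbub : |b| ≤ s₀ + t₀ := by
    rw [abs_of_nonneg i7]
    simp only [Tline] at i5
    nlinarith [mul_pos hy (show (0:ℝ) < s + t by linarith)]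
  exact Set.mem_biUnion (Set.mem_Iic.mpr hdle) ⟨⟨m, hm⟩, hx1, ⟨(n:ℤ), by
    rw [hn']; push_cast; ring⟩, hbub⟩
end

section
/- Correctness of the slanted firing squad algorithm (main theorem): a point p ∈ ℝ² is an accumulation point of the set of node positions P (i.e. every neighbourhood of p contains a point of P different from p; equivalently p ∈ closure(P \ {p})) if and only if p lies on the target segment, i.e. p = (x, T(x)) for some x ∈ [−1, 1]. In other words, the derived set of P is exactly the segment of ℝ² joining (−1, s₀) to (1, t₀). -/
open Set

/-!
Every node `((x, τ), (s, t), d)` satisfies `τ = T(x) - (s + t)/2 · 2⁻ᵈ` with `|x| ≤ 1`, `t - s`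
constant and `s + t` bounded, and its coordinates are multiples of `2⁻ᵈ`. Hence there are only
finitely many nodes of depth `≤ n`, while all deeper ones lie within `O(2⁻ⁿ)` of the segment: an
accumulation point lies on the segment. Conversely, delays always end in a split node, so
choosing the left or right child at each depth performs a binary search towards any
`y ∈ [-1, 1]`, producing nodes within `O(2⁻ⁿ)` of `(y, T(y))` and strictly below it.
-/

open Filter Topology Metric

lemma two_zpow_neg_succ (d : ℕ) : (2:ℝ) ^ (-((d:ℤ) + 1)) = 2 ^ (-(d:ℤ)) / 2 := by
  rw [neg_add, zpow_add₀ two_ne_zero, zpow_neg_one, div_eq_mul_inv]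

lemma tendsto_two_zpow_neg_atTop : Tendsto (fun n : ℕ ↦ (2:ℝ) ^ (-(n:ℤ))) atTop (𝓝 0) := by
  simpa only [zpow_neg, zpow_natCast, Function.comp_def] using
    tendsto_inv_atTop_zero.comp (tendsto_pow_atTop_atTop_of_one_lt one_lt_two)

lemma exists_mul_two_zpow_neg_lt (C : ℝ) {ε : ℝ} (hε : 0 < ε) :
    ∃ n : ℕ, C * 2 ^ (-(n:ℤ)) < ε := by
  have h := tendsto_two_zpow_neg_atTop.const_mul C
  rw [mul_zero] at h
  exact (h.eventually (gt_mem_nhds hε)).exists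

noncomputable def dyadic (d : ℕ) : AddSubgroup ℝ := AddSubgroup.zmultiples ((2:ℝ) ^ (-(d:ℤ)))

lemma two_zpow_neg_mem_dyadic (d : ℕ) : (2:ℝ) ^ (-(d:ℤ)) ∈ dyadic d :=
  AddSubgroup.mem_zmultiples _

lemma two_zpow_neg_succ_mem_dyadic (d : ℕ) : (2:ℝ) ^ (-((d:ℤ) + 1)) ∈ dyadic (d + 1) := by
  exact_mod_cast two_zpow_neg_mem_dyadic (d + 1)

lemma dyadic_mono : Monotone dyadic := by
  refine monotone_nat_of_le_succ fun d ↦ AddSubgroup.zmultiples_le_of_mem ?_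
  have h : (2:ℝ) ^ (-(d:ℤ)) = (2:ℤ) • (2:ℝ) ^ (-((d + 1 : ℕ) : ℤ)) := by
    push_cast
    rw [two_zpow_neg_succ, zsmul_eq_mul]
    push_cast
    ring
  rw [h]
  exact zsmul_mem (two_zpow_neg_mem_dyadic _) 2

lemma IsCompact.finite_inter_dyadic {K : Set ℝ} (hK : IsCompact K) (d : ℕ) :
    (K ∩ dyadic d).Finite := by
  have h := tendsto_cofinite_cocompact_iff.1
    (AddSubgroup.tendsto_zmultiples_subtype_cofinite ((2:ℝ) ^ (-(d:ℤ)))) K hK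
  simpa [Set.image_preimage_eq_inter_range, dyadic] using h.image Subtype.val

structure NodeInvariant (s₀ t₀ x τ s t : ℝ) (d : ℕ) : Prop where
  one_le_s : 1 ≤ s
  one_le_t : 1 ≤ t
  sub_eq : t - s = t₀ - s₀
  -- a split needs `s < 2` or `t < 2`; as `t - s` is fixed, this bounds the children's `s + t`
  add_le : s + t ≤ 6 + 3 * (s₀ + t₀)
  abs_x_le : |x| ≤ 1 - 2 ^ (-(d:ℤ))
  τ_nonneg : 0 ≤ τ
  τ_eq : τ = Tline s₀ t₀ x - (s + t) / 2 * 2 ^ (-(d:ℤ))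
  x_mem_dyadic : x ∈ dyadic d
  τ_mem_dyadic : τ ∈ dyadic d

theorem Node.invariant {s₀ t₀ x τ s t : ℝ} {d : ℕ} (hs₀ : 1 ≤ s₀) (ht₀ : 1 ≤ t₀)
    (h : Node s₀ t₀ ((x, τ), (s, t), d)) : NodeInvariant s₀ t₀ x τ s t d := by
  suffices ∀ q, Node s₀ t₀ q → NodeInvariant s₀ t₀ q.1.1 q.1.2 q.2.1.1 q.2.1.2 q.2.2 from
    this _ h
  intro q hq
  induction hq with
  | root =>
    exact ⟨hs₀, ht₀, rfl, by linarith, by simp, le_rfl, by simp [Tline], zero_mem _, zero_mem _⟩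
  | @delay x τ s t d _ hs ht ih =>
    dsimp only at ih ⊢
    have hpos : (0:ℝ) < 2 ^ (-(d:ℤ)) := by positivity
    exact ⟨by linarith, by linarith, by linarith [ih.sub_eq], by linarith [ih.add_le],
      ih.abs_x_le, by linarith [ih.τ_nonneg], by rw [ih.τ_eq]; ring, ih.x_mem_dyadic,
      add_mem ih.τ_mem_dyadic (two_zpow_neg_mem_dyadic d)⟩
  | @splitL x τ s t d _ hc ih =>
    dsimp only at ih ⊢
    have hpos : (0:ℝ) < 2 ^ (-(d:ℤ)) := by positivity
    have hhalf := two_zpow_neg_succ d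
    refine ⟨by linarith [ih.one_le_s], by linarith [ih.one_le_s, ih.one_le_t],
      by linarith [ih.sub_eq], by rcases hc with hc | hc <;> linarith [ih.sub_eq], ?_,
      by linarith [ih.τ_nonneg], ?_, sub_mem (dyadic_mono d.le_succ ih.x_mem_dyadic)
      (two_zpow_neg_succ_mem_dyadic d), add_mem (dyadic_mono d.le_succ ih.τ_mem_dyadic)
      (two_zpow_neg_succ_mem_dyadic d)⟩
    · rw [Nat.cast_succ, hhalf]
      exact (abs_sub _ _).trans
        (by rw [abs_of_pos (half_pos hpos)]; linarith [ih.abs_x_le])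
    · rw [Nat.cast_succ, hhalf, ih.τ_eq, Tline, Tline]
      linear_combination (-(2:ℝ) ^ (-(d:ℤ)) / 4) * ih.sub_eq
  | @splitR x τ s t d _ hc ih =>
    dsimp only at ih ⊢
    have hpos : (0:ℝ) < 2 ^ (-(d:ℤ)) := by positivity
    have hhalf := two_zpow_neg_succ d
    refine ⟨by linarith [ih.one_le_s, ih.one_le_t], by linarith [ih.one_le_t],
      by linarith [ih.sub_eq], by rcases hc with hc | hc <;> linarith [ih.sub_eq], ?_,
      by linarith [ih.τ_nonneg], ?_, add_mem (dyadic_mono d.le_succ ih.x_mem_dyadic)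
      (two_zpow_neg_succ_mem_dyadic d), add_mem (dyadic_mono d.le_succ ih.τ_mem_dyadic)
      (two_zpow_neg_succ_mem_dyadic d)⟩
    · rw [Nat.cast_succ, hhalf]
      exact (abs_add_le _ _).trans
        (by rw [abs_of_pos (half_pos hpos)]; linarith [ih.abs_x_le])
    · rw [Nat.cast_succ, hhalf, ih.τ_eq, Tline, Tline]
      linear_combination ((2:ℝ) ^ (-(d:ℤ)) / 4) * ih.sub_eq

def targetSegment (s₀ t₀ : ℝ) : Set (ℝ × ℝ) := (fun x ↦ (x, Tline s₀ t₀ x)) '' Set.Icc (-1) 1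

lemma isClosed_targetSegment (s₀ t₀ : ℝ) : IsClosed (targetSegment s₀ t₀) :=
  (isCompact_Icc.image (continuous_id.prodMk (by unfold Tline; fun_prop))).isClosed

lemma Tline_le_add {s₀ t₀ x : ℝ} (hs₀ : 0 ≤ s₀) (ht₀ : 0 ≤ t₀) (hx : |x| ≤ 1) :
    Tline s₀ t₀ x ≤ s₀ + t₀ := by
  obtain ⟨hx₁, hx₂⟩ := abs_le.1 hx
  unfold Tline
  nlinarith

lemma dist_graph_Tline_le (s₀ t₀ x y : ℝ) :
    dist (x, Tline s₀ t₀ x) (y, Tline s₀ t₀ y) ≤ (1 + |t₀ - s₀|) * dist x y := by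
  have hT : dist (Tline s₀ t₀ x) (Tline s₀ t₀ y) = |t₀ - s₀| / 2 * dist x y := by
    rw [Real.dist_eq, Real.dist_eq, Tline, Tline, ← abs_two, ← abs_div, ← abs_mul]
    ring_nf
  rw [Prod.dist_eq, hT]
  have := dist_nonneg (x := x) (y := y)
  have := abs_nonneg (t₀ - s₀)
  exact max_le (by nlinarith) (by nlinarith)

namespace NodeInvariant

variable {s₀ t₀ x τ s t : ℝ} {d : ℕ}

lemma lt_Tline (h : NodeInvariant s₀ t₀ x τ s t d) : τ < Tline s₀ t₀ x := by
  have : 0 < (s + t) / 2 * (2:ℝ) ^ (-(d:ℤ)) :=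
    mul_pos (by linarith [h.one_le_s, h.one_le_t]) (by positivity)
  linarith [h.τ_eq]

lemma mem_targetSegment (h : NodeInvariant s₀ t₀ x τ s t d) :
    (x, Tline s₀ t₀ x) ∈ targetSegment s₀ t₀ := by
  have : (0:ℝ) < 2 ^ (-(d:ℤ)) := by positivity
  exact ⟨x, abs_le.1 (by linarith [h.abs_x_le]), rfl⟩

lemma dist_le (h : NodeInvariant s₀ t₀ x τ s t d) :
    dist (x, τ) (x, Tline s₀ t₀ x) ≤ (3 + 3 / 2 * (s₀ + t₀)) * 2 ^ (-(d:ℤ)) := by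
  have hlt := h.lt_Tline
  have hle : Tline s₀ t₀ x - τ ≤ (3 + 3 / 2 * (s₀ + t₀)) * 2 ^ (-(d:ℤ)) := by
    rw [h.τ_eq, sub_sub_cancel]
    exact mul_le_mul_of_nonneg_right (by linarith [h.add_le]) (by positivity)
  rw [Prod.dist_eq, dist_self, Real.dist_eq, abs_sub_comm, abs_of_pos (sub_pos.2 hlt)]
  exact max_le (by linarith) hle

end NodeInvariant

def nodePositions (s₀ t₀ : ℝ) : Set (ℝ × ℝ) := {q | ∃ s t : ℝ, ∃ d : ℕ, Node s₀ t₀ (q, (s, t), d)}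

def nodePositionsUpTo (s₀ t₀ : ℝ) (n : ℕ) : Set (ℝ × ℝ) :=
  {q | ∃ s t : ℝ, ∃ d ≤ n, Node s₀ t₀ (q, (s, t), d)}

theorem finite_nodePositionsUpTo {s₀ t₀ : ℝ} (hs₀ : 1 ≤ s₀) (ht₀ : 1 ≤ t₀) (n : ℕ) :
    (nodePositionsUpTo s₀ t₀ n).Finite := by
  refine (((isCompact_Icc (a := -1) (b := 1)).finite_inter_dyadic n).prod
    ((isCompact_Icc (a := 0) (b := s₀ + t₀)).finite_inter_dyadic n)).subset ?_
  rintro ⟨x, τ⟩ ⟨s, t, d, hd, h⟩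
  have hinv := h.invariant hs₀ ht₀
  have hx : |x| ≤ 1 := hinv.abs_x_le.trans (by simp)
  exact ⟨⟨abs_le.1 hx, dyadic_mono hd hinv.x_mem_dyadic⟩,
    ⟨⟨hinv.τ_nonneg, hinv.lt_Tline.le.trans (Tline_le_add (by linarith) (by linarith) hx)⟩,
      dyadic_mono hd hinv.τ_mem_dyadic⟩⟩

theorem Node.exists_split_node {s₀ t₀ x τ s t : ℝ} {d : ℕ}
    (h : Node s₀ t₀ ((x, τ), (s, t), d)) :
    ∃ τ' s' t' : ℝ, Node s₀ t₀ ((x, τ'), (s', t'), d) ∧ (s' < 2 ∨ t' < 2) := by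
  obtain ⟨n, hn⟩ := exists_nat_gt s
  induction n generalizing τ s t with
  | zero => exact ⟨τ, s, t, h, Or.inl (by norm_num at hn; linarith)⟩
  | succ n ih =>
    by_cases hc : s < 2 ∨ t < 2
    · exact ⟨τ, s, t, h, hc⟩
    rw [not_or, not_lt, not_lt] at hc
    exact ih (h.delay hc.1 hc.2) (by push_cast at hn; linarith)

theorem exists_node_near {s₀ t₀ y : ℝ} (hy : |y| ≤ 1) (d : ℕ) :
    ∃ x τ s t : ℝ, Node s₀ t₀ ((x, τ), (s, t), d) ∧ |y - x| ≤ 2 ^ (-(d:ℤ)) := by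
  induction d with
  | zero => exact ⟨0, 0, s₀, t₀, Node.root, by simpa using hy⟩
  | succ d ih =>
    obtain ⟨x, _, _, _, h, hx⟩ := ih
    obtain ⟨τ, s, t, h, hc⟩ := h.exists_split_node
    have hhalf := two_zpow_neg_succ d
    push_cast
    rw [hhalf]
    obtain ⟨hx₁, hx₂⟩ := abs_le.1 hx
    rcases le_total y x with hyx | hxy
    · refine ⟨_, _, _, _, h.splitL hc, abs_le.2 ⟨?_, ?_⟩⟩ <;> linarith
    · refine ⟨_, _, _, _, h.splitR hc, abs_le.2 ⟨?_, ?_⟩⟩ <;> linarith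

theorem nodePositions_subset_union_cthickening {s₀ t₀ : ℝ} (hs₀ : 1 ≤ s₀) (ht₀ : 1 ≤ t₀)
    (n : ℕ) : nodePositions s₀ t₀ ⊆ nodePositionsUpTo s₀ t₀ n ∪
      cthickening ((3 + 3 / 2 * (s₀ + t₀)) * 2 ^ (-(n:ℤ))) (targetSegment s₀ t₀) := by
  rintro ⟨x, τ⟩ ⟨s, t, d, h⟩
  rcases le_or_gt d n with hd | hd
  · exact Or.inl ⟨s, t, d, hd, h⟩
  right
  have hinv := h.invariant hs₀ ht₀
  refine mem_cthickening_of_dist_le _ _ _ _ hinv.mem_targetSegment (hinv.dist_le.trans ?_)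
  refine mul_le_mul_of_nonneg_left ?_ (by linarith)
  exact zpow_le_zpow_right₀ one_le_two (by omega)

theorem mem_targetSegment_of_mem_closure {s₀ t₀ : ℝ} (hs₀ : 1 ≤ s₀) (ht₀ : 1 ≤ t₀) {p : ℝ × ℝ}
    (hp : p ∈ closure (nodePositions s₀ t₀ \ {p})) : p ∈ targetSegment s₀ t₀ := by
  rw [← (isClosed_targetSegment s₀ t₀).closure_eq, closure_eq_iInter_cthickening]
  refine mem_iInter₂.2 fun δ hδ ↦ ?_
  obtain ⟨n, hn⟩ := exists_mul_two_zpow_neg_lt (3 + 3 / 2 * (s₀ + t₀)) hδ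
  set F := nodePositionsUpTo s₀ t₀ n
  set C := cthickening ((3 + 3 / 2 * (s₀ + t₀)) * 2 ^ (-(n:ℤ))) (targetSegment s₀ t₀)
  have hsub : nodePositions s₀ t₀ \ {p} ⊆ (F \ {p}) ∪ C := by
    refine (sdiff_subset_sdiff_left (nodePositions_subset_union_cthickening hs₀ ht₀ n)).trans ?_
    rw [union_sdiff_distrib]
    exact union_subset_union_right _ sdiff_subset
  have hclosed : IsClosed ((F \ {p}) ∪ C) :=
    (finite_nodePositionsUpTo hs₀ ht₀ n).sdiff.isClosed.union isClosed_cthickening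
  rcases closure_minimal hsub hclosed hp with hpF | hpC
  · exact absurd rfl hpF.2
  · exact cthickening_mono hn.le _ hpC

theorem mem_closure_of_mem_targetSegment {s₀ t₀ : ℝ} (hs₀ : 1 ≤ s₀) (ht₀ : 1 ≤ t₀) {p : ℝ × ℝ}
    (hp : p ∈ targetSegment s₀ t₀) : p ∈ closure (nodePositions s₀ t₀ \ {p}) := by
  obtain ⟨y, hy, rfl⟩ := hp
  rw [Metric.mem_closure_iff]
  intro ε hε
  obtain ⟨n, hn⟩ := exists_mul_two_zpow_neg_lt (1 + |t₀ - s₀| + (3 + 3 / 2 * (s₀ + t₀))) hε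
  obtain ⟨x, τ, s, t, h, hxy⟩ := exists_node_near (s₀ := s₀) (t₀ := t₀) (abs_le.2 hy) n
  have hinv := h.invariant hs₀ ht₀
  refine ⟨(x, τ), ⟨⟨s, t, n, h⟩, fun heq ↦ ?_⟩, ?_⟩
  · obtain ⟨rfl, hτ⟩ := Prod.mk.inj heq
    exact hinv.lt_Tline.ne hτ
  calc dist (y, Tline s₀ t₀ y) (x, τ)
      ≤ dist (y, Tline s₀ t₀ y) (x, Tline s₀ t₀ x) + dist (x, Tline s₀ t₀ x) (x, τ) :=
        dist_triangle _ _ _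
    _ ≤ (1 + |t₀ - s₀|) * 2 ^ (-(n:ℤ)) + (3 + 3 / 2 * (s₀ + t₀)) * 2 ^ (-(n:ℤ)) := by
        gcongr
        · exact (dist_graph_Tline_le s₀ t₀ y x).trans
            (mul_le_mul_of_nonneg_left (by rwa [Real.dist_eq]) (by positivity))
        · rw [dist_comm]
          exact hinv.dist_le
    _ < ε := by linarith

theorem stmt18 (s₀ t₀ : ℝ) (hs₀ : 1 ≤ s₀) (ht₀ : 1 ≤ t₀) (p : ℝ × ℝ) :
    p ∈ closure ({q : ℝ × ℝ | ∃ s t : ℝ, ∃ d : ℕ, Node s₀ t₀ (q, (s, t), d)} \ {p})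
    ↔ ∃ x ∈ Set.Icc (-1 : ℝ) 1, p = (x, Tline s₀ t₀ x) := by
  refine ⟨fun hp ↦ ?_, ?_⟩
  · obtain ⟨x, hx, hpx⟩ := mem_targetSegment_of_mem_closure hs₀ ht₀ hp
    exact ⟨x, hx, hpx.symm⟩
  · rintro ⟨x, hx, rfl⟩
    exact mem_closure_of_mem_targetSegment hs₀ ht₀ ⟨x, hx, rfl⟩
end
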